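/- Fix natural numbers d, ω, δ with ω ≤ d and δ ≤ d. Then there exists a set S of binary words of length d, each of weight exactly ω (i.e., each x ∈ S ⊆ {0,1}^d satisfies Σ_{i=1}^d x_i = ω), such that any two distinct words in S have Hamming distance at least δ, and |S| ≥ C(d,ω) / (Σ_{i=0}^{⌊δ/2⌋} C(ω,i)·C(d−ω,i)), where C(n,k) denotes the binomial coefficient. -/

import Mathlib

/-!
A code of weight-`ω` words with minimum distance `δ` that is maximal under inclusion covers
the weight-`ω` slice by Hamming balls of radius `δ - 1` around its codewords. Two words of the
same weight at distance `2i` are related by switching off `i` of the `ω` ones and switching on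
`i` of the `d - ω` zeros, so each such ball contains at most `∑_{i ≤ δ/2} C(ω,i) C(d-ω,i)` words,
and the `C(d,ω)` words of the slice need at least the claimed number of balls.
-/

open Finset
open scoped symmDiff

/-- The weight of a binary word `x : Fin d → Bool` is the number of coordinates equal to 1. -/
def weight {d : ℕ} (x : Fin d → Bool) : ℕ := (Finset.univ.filter fun i => x i = true).card

section Greedy

variable {α : Type*} [DecidableEq α]

theorem Finset.exists_maximal_pairwise_subset (W : Finset α) {r : α → α → Prop}
    (hr : ∀ x y, r x y → r y x) :
    ∃ S ⊆ W, (S : Set α).Pairwise r ∧ ∀ w ∈ W, w ∉ S → ∃ s ∈ S, ¬ r w s := by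
  classical
  set P := W.powerset.filter fun S : Finset α => (S : Set α).Pairwise r
  obtain ⟨S, hS, hmax⟩ := P.exists_max_image card ⟨∅, by simp [P]⟩
  rw [mem_filter, mem_powerset] at hS
  refine ⟨S, hS.1, hS.2, fun w hw hwS => ?_⟩
  by_contra! hfar
  have hins : insert w S ∈ P := by
    rw [mem_filter, mem_powerset, coe_insert]
    exact ⟨insert_subset hw hS.1,
      hS.2.insert_of_notMem hwS fun s hs => ⟨hfar s hs, hr _ _ (hfar s hs)⟩⟩
  have := hmax _ hins
  rw [card_insert_of_notMem hwS] at this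
  omega

theorem Finset.exists_pairwise_subset_card_le_card_mul (W : Finset α) {r : α → α → Prop}
    [DecidableRel r] (hr : ∀ x y, r x y → r y x) (V : ℕ)
    (hball : ∀ s ∈ W, #{w ∈ W | w = s ∨ ¬ r w s} ≤ V) :
    ∃ S ⊆ W, (S : Set α).Pairwise r ∧ #W ≤ #S * V := by
  obtain ⟨S, hSW, hS, hcover⟩ := W.exists_maximal_pairwise_subset hr
  refine ⟨S, hSW, hS, ?_⟩
  calc #W ≤ #(S.biUnion fun s => {w ∈ W | w = s ∨ ¬ r w s}) := by
        refine card_le_card fun w hw => mem_biUnion.2 ?_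
        by_cases hwS : w ∈ S
        · exact ⟨w, hwS, mem_filter.2 ⟨hw, .inl rfl⟩⟩
        · obtain ⟨s, hs, hws⟩ := hcover w hw hwS
          exact ⟨s, hs, mem_filter.2 ⟨hw, .inr hws⟩⟩
    _ ≤ #S * V := card_biUnion_le_card_mul _ _ _ fun s hs => hball s (hSW hs)

end Greedy

theorem Finset.card_filter_card_eq_card_symmDiff_le {α : Type*} [Fintype α] [DecidableEq α]
    (Y : Finset α) (k : ℕ) :
    #{X : Finset α | #X = #Y ∧ #(X ∆ Y) ≤ 2 * k}
      ≤ ∑ i ∈ range (k + 1), (#Y).choose i * (Fintype.card α - #Y).choose i := by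
  calc _ ≤ #((range (k + 1)).biUnion fun i => Y.powersetCard i ×ˢ Yᶜ.powersetCard i) := by
        refine card_le_card_of_injOn (fun X => (Y \ X, X \ Y)) (fun X hX => ?_) ?_
        · obtain ⟨hXY, hdist⟩ := (mem_filter.1 hX).2
          have hsymm : #(X ∆ Y) = #(X \ Y) + #(Y \ X) := by
            rw [symmDiff_def, sup_eq_union, card_union_of_disjoint disjoint_sdiff_sdiff]
          have hout := card_sdiff_add_card_inter X Y
          have hin := card_sdiff_add_card_inter Y X
          rw [inter_comm] at hin
          simp only [coe_biUnion, coe_range, Set.mem_iUnion, Set.mem_Iio, coe_product,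
            Set.mem_prod, mem_coe, mem_powersetCard]
          exact ⟨#(Y \ X), by omega, ⟨sdiff_subset, rfl⟩,
            ⟨fun i hi => mem_compl.2 (mem_sdiff.1 hi).2, by omega⟩⟩
        · -- `X = (X \ Y) ∪ (Y \ (Y \ X))`
          intro X _ X' _ h
          simp only [Prod.mk.injEq] at h
          rw [← sdiff_union_inter X Y, ← sdiff_union_inter X' Y, h.2, inter_comm X,
            inter_comm X', ← sdiff_sdiff_self_left, ← sdiff_sdiff_self_left, h.1]
    _ ≤ _ := by
        refine card_biUnion_le.trans (sum_le_sum fun i _ => ?_)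
        rw [card_product, card_powersetCard, card_powersetCard, card_compl]

section BinaryWords

variable {d : ℕ}

def onesSet (x : Fin d → Bool) : Finset (Fin d) := {i | x i = true}

theorem weight_eq_card_onesSet (x : Fin d → Bool) : weight x = #(onesSet x) := rfl

theorem onesSet_injective : Function.Injective (onesSet (d := d)) := fun x y h => funext fun i => by
  simpa [onesSet] using Finset.ext_iff.1 h i

theorem hammingDist_eq_card_symmDiff_onesSet (x y : Fin d → Bool) :
    hammingDist x y = #(onesSet x ∆ onesSet y) := by
  unfold hammingDist onesSet
  congr 1
  ext i
  simp only [mem_filter, mem_univ, true_and, mem_symmDiff]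
  cases x i <;> cases y i <;> simp

theorem card_filter_weight_eq (ω : ℕ) : #{x : Fin d → Bool | weight x = ω} = d.choose ω := by
  rw [show d.choose ω = #(powersetCard ω (univ : Finset (Fin d))) by simp]
  refine card_nbij' onesSet (fun A i => decide (i ∈ A)) (fun x hx => ?_) (fun A hA => ?_)
    (fun x _ => ?_) (fun A _ => ?_)
  · simpa [mem_powersetCard, weight_eq_card_onesSet] using (mem_filter.1 hx).2
  · refine mem_filter.2 ⟨mem_univ _, ?_⟩
    simpa [weight_eq_card_onesSet, onesSet] using (mem_powersetCard.1 hA).2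
  · funext i; simp [onesSet]
  · ext i; simp [onesSet]

theorem card_filter_weight_hammingDist_le (s : Fin d → Bool) (k : ℕ) :
    #{x : Fin d → Bool | weight x = weight s ∧ hammingDist x s ≤ 2 * k}
      ≤ ∑ i ∈ range (k + 1), (weight s).choose i * (d - weight s).choose i := by
  calc _ ≤ #{X : Finset (Fin d) | #X = #(onesSet s) ∧ #(X ∆ onesSet s) ≤ 2 * k} := by
        refine card_le_card_of_injOn onesSet (fun x hx => ?_) onesSet_injective.injOn
        simpa [hammingDist_eq_card_symmDiff_onesSet, weight_eq_card_onesSet] using hx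
    _ ≤ _ := by
        simpa [weight_eq_card_onesSet] using
          (onesSet s).card_filter_card_eq_card_symmDiff_le k

end BinaryWords

theorem stmt_0 (d ω δ : ℕ) :
    ∃ S : Finset (Fin d → Bool),
      (∀ x ∈ S, weight x = ω) ∧
      (∀ x ∈ S, ∀ y ∈ S, x ≠ y → δ ≤ hammingDist x y) ∧
      ((d.choose ω : ℝ) / (∑ i ∈ Finset.range (δ / 2 + 1),
          (ω.choose i : ℝ) * ((d - ω).choose i : ℝ)) ≤ (S.card : ℝ)) := by
  set V := ∑ i ∈ range (δ / 2 + 1), ω.choose i * (d - ω).choose i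
  have hball (s : Fin d → Bool) (hs : s ∈ ({x | weight x = ω} : Finset _)) :
      #{x ∈ ({x | weight x = ω} : Finset _) | x = s ∨ ¬ δ ≤ hammingDist x s} ≤ V := by
    have hs : weight s = ω := (mem_filter.1 hs).2
    calc _ ≤ #{x : Fin d → Bool | weight x = weight s ∧ hammingDist x s ≤ 2 * (δ / 2)} := by
          refine card_le_card fun x hx => ?_
          simp only [filter_filter, mem_filter, mem_univ, true_and] at hx ⊢
          obtain ⟨hx, rfl | hclose⟩ := hx
          · simp
          · exact ⟨hx.trans hs.symm, by omega⟩
      _ ≤ V := hs ▸ card_filter_weight_hammingDist_le s (δ / 2)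
  obtain ⟨S, hSW, hsep, hcard⟩ := exists_pairwise_subset_card_le_card_mul _
    (fun x y (h : δ ≤ hammingDist x y) => hammingDist_comm x y ▸ h) V hball
  refine ⟨S, fun x hx => (mem_filter.1 (hSW hx)).2, hsep, ?_⟩
  have hV : 0 < V := sum_pos' (fun i _ => Nat.zero_le _) ⟨0, by simp⟩
  rw [card_filter_weight_eq] at hcard
  rw [div_le_iff₀ (by exact_mod_cast hV)]
  exact_mod_cast hcard
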